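/- Let (A,V) be a permutation group with A ∈ DGR, A ∉ GR, and A ≠ I_2. If there exists a permutation of V that transposes the orbitals of A, then for every permutation group (B,W) the product-action wreath product A Wr B does not belong to GR. -/

import Mathlib

open scoped Classical

/-- The automorphism group of a colored graph, i.e. of a coloring of the
unordered pairs of distinct elements of `V` (values of `E` on diagonal pairs
are irrelevant). -/
def graphAut {V C : Type} (E : Sym2 V → C) : Subgroup (Equiv.Perm V) where
  carrier := {σ | ∀ v w : V, v ≠ w → E s(σ v, σ w) = E s(v, w)}
  one_mem' := by intro v w _; rfl
  mul_mem' := by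
    intro a b ha hb v w hvw
    have hb' := hb v w hvw
    have ha' := ha (b v) (b w) (fun h => hvw (b.injective h))
    simpa [Equiv.Perm.mul_apply] using ha'.trans hb'
  inv_mem' := by
    intro a ha v w hvw
    have h : a⁻¹ v ≠ a⁻¹ w := fun h => hvw (by simpa using congrArg a h)
    have := ha (a⁻¹ v) (a⁻¹ w) h
    simpa using this.symm

/-- The automorphism group of a colored digraph, i.e. of a coloring of the
ordered pairs of elements of `V`. -/
def digraphAut {V C : Type} (E : V → V → C) : Subgroup (Equiv.Perm V) where
  carrier := {σ | ∀ v w : V, E (σ v) (σ w) = E v w}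
  one_mem' := by intro v w; rfl
  mul_mem' := by
    intro a b ha hb v w
    simpa [Equiv.Perm.mul_apply] using (ha (b v) (b w)).trans (hb v w)
  inv_mem' := by
    intro a ha v w
    simpa using (ha (a⁻¹ v) (a⁻¹ w)).symm

/-- The automorphism group of a colored hypergraph, i.e. of a coloring of the
nonempty subsets of `W`. -/
def hyperAut {W C : Type} (E : Set W → C) : Subgroup (Equiv.Perm W) where
  carrier := {σ | ∀ X : Set W, X.Nonempty → E (⇑σ '' X) = E X}
  one_mem' := by intro X hX; simp
  mul_mem' := by
    intro a b ha hb X hX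
    have h1 : ⇑(a * b) '' X = ⇑a '' (⇑b '' X) := by
      rw [Equiv.Perm.coe_mul, Set.image_comp]
    rw [h1, ha _ (hX.image _), hb _ hX]
  inv_mem' := by
    intro a ha X hX
    have h1 : ⇑a '' (⇑a⁻¹ '' X) = X := by
      rw [← Set.image_comp]
      have : ⇑a ∘ ⇑a⁻¹ = id := by funext x; simp
      rw [this, Set.image_id]
    have := ha (⇑a⁻¹ '' X) (hX.image _)
    rw [h1] at this
    exact this.symm

/-- `A` belongs to the class GR: it is the automorphism group of some colored graph. -/
def IsGR {V : Type} (A : Subgroup (Equiv.Perm V)) : Prop :=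
  ∃ (C : Type) (E : Sym2 V → C), graphAut E = A

/-- `A` belongs to the class DGR: it is the automorphism group of some colored digraph. -/
def IsDGR {V : Type} (A : Subgroup (Equiv.Perm V)) : Prop :=
  ∃ (C : Type) (E : V → V → C), digraphAut E = A

/-- `B` belongs to the class BGR: it is the automorphism group of some colored hypergraph. -/
def IsBGR {W : Type} (B : Subgroup (Equiv.Perm W)) : Prop :=
  ∃ (C : Type) (E : Set W → C), hyperAut E = B

/-- `(A, V)` is (permutation isomorphic to) the trivial permutation group `I₂`
on a two-element set. -/
def IsI2 {V : Type} (A : Subgroup (Equiv.Perm V)) : Prop :=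
  A = ⊥ ∧ Nat.card V = 2

/-- The permutation group `A` acts transitively on `V`. -/
def permTransitive {V : Type} (A : Subgroup (Equiv.Perm V)) : Prop :=
  ∀ v w : V, ∃ a ∈ A, a v = w

/-- The orbit of a point under a permutation group. -/
def ptOrbit {V : Type} (A : Subgroup (Equiv.Perm V)) (v : V) : Set V :=
  {u | ∃ a ∈ A, a v = u}

/-- The orbit (2*-orbital) of an unordered pair under a permutation group. -/
def pairOrbit {V : Type} (A : Subgroup (Equiv.Perm V)) (p : Sym2 V) : Set (Sym2 V) :=
  {q | ∃ a ∈ A, Sym2.map ⇑a p = q}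

/-- The orbital of an ordered pair under a permutation group. -/
def orbital {V : Type} (A : Subgroup (Equiv.Perm V)) (x : V × V) : Set (V × V) :=
  {y | ∃ a ∈ A, (a x.1, a x.2) = y}

/-- The closure `cl(A)` of a permutation group `A`: the group of all permutations of `V`
mapping each 2*-orbital of `A` onto itself. -/
def grCl {V : Type} (A : Subgroup (Equiv.Perm V)) : Subgroup (Equiv.Perm V) where
  carrier := {σ | ∀ p : Sym2 V, ¬ p.IsDiag → Sym2.map ⇑σ '' pairOrbit A p = pairOrbit A p}
  one_mem' := by
    intro p hp
    rw [Equiv.Perm.coe_one, Sym2.map_id, Set.image_id]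
  mul_mem' := by
    intro a b ha hb p hp
    rw [Equiv.Perm.coe_mul, Sym2.map_comp, Set.image_comp, hb p hp, ha p hp]
  inv_mem' := by
    intro a ha p hp
    have h1 : Sym2.map ⇑a⁻¹ ∘ Sym2.map ⇑a = id := by
      rw [← Sym2.map_comp]
      have : ⇑a⁻¹ ∘ ⇑a = id := by funext x; simp
      rw [this, Sym2.map_id]
    conv_lhs => rw [← ha p hp, ← Set.image_comp, h1, Set.image_id]

/-- The permutation `α` transposes the orbitals of `A`: it maps every orbital
onto the orbital paired with it. -/
def TransposesOrbitals {V : Type} (A : Subgroup (Equiv.Perm V)) (α : Equiv.Perm V) : Prop :=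
  ∀ x : V × V, (fun y : V × V => (α y.1, α y.2)) '' orbital A x = Prod.swap '' orbital A x

/-- The rank of a permutation group: the (cardinal) number of its orbitals. -/
def orbRank {V : Type} (A : Subgroup (Equiv.Perm V)) : Cardinal :=
  Cardinal.mk {O : Set (V × V) // ∃ x, O = orbital A x}

/-- `nsp A`: the number of pairs `{O, O'}` of distinct mutually paired
(i.e. non-self-paired) orbitals of `A`. -/
noncomputable def nsp {V : Type} (A : Subgroup (Equiv.Perm V)) : ℕ :=
  Nat.card {O : Set (V × V) // (∃ x, O = orbital A x) ∧ Prod.swap '' O ≠ O} / 2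

/-- The type of orbits of a permutation group `(A, V)` on `V`. -/
def orbitType {V : Type} (A : Subgroup (Equiv.Perm V)) : Type :=
  {O : Set V // ∃ v, O = ptOrbit A v}

/-- The imprimitive wreath product `A ≀ B` of permutation groups `(A,V)` and `(B,W)`,
acting on `V × W`. -/
def imprimWr {V W : Type} (A : Subgroup (Equiv.Perm V)) (B : Subgroup (Equiv.Perm W)) :
    Subgroup (Equiv.Perm (V × W)) where
  carrier := {γ | ∃ β ∈ B, ∃ α : W → Equiv.Perm V, (∀ w, α w ∈ A) ∧
    ∀ p : V × W, γ p = (α p.2 p.1, β p.2)}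
  one_mem' := ⟨1, B.one_mem, fun _ => 1, fun _ => A.one_mem, fun p => rfl⟩
  mul_mem' := by
    rintro γ₁ γ₂ ⟨β₁, hβ₁, α₁, hα₁, h₁⟩ ⟨β₂, hβ₂, α₂, hα₂, h₂⟩
    refine ⟨β₁ * β₂, B.mul_mem hβ₁ hβ₂, fun w => α₁ (β₂ w) * α₂ w,
      fun w => A.mul_mem (hα₁ _) (hα₂ _), fun p => ?_⟩
    have h0 : (γ₁ * γ₂) p = γ₁ (γ₂ p) := rfl
    rw [h0, h₂ p, h₁ (α₂ p.2 p.1, β₂ p.2)]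
    rfl
  inv_mem' := by
    rintro γ ⟨β, hβ, α, hα, h⟩
    refine ⟨β⁻¹, B.inv_mem hβ, fun w => (α (β⁻¹ w))⁻¹,
      fun w => A.inv_mem (hα _), fun p => ?_⟩
    have key : γ ((α (β⁻¹ p.2))⁻¹ p.1, β⁻¹ p.2) = p := by
      rw [h]
      simp
    calc γ⁻¹ p = γ⁻¹ (γ ((α (β⁻¹ p.2))⁻¹ p.1, β⁻¹ p.2)) := by rw [key]
    _ = ((α (β⁻¹ p.2))⁻¹ p.1, β⁻¹ p.2) := by simp

/-- The wreath product `A Wr B` of permutation groups `(A,V)` and `(B,W)` in its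
product action on the set `V^W` of functions `W → V`. -/
def prodWr {V W : Type} (A : Subgroup (Equiv.Perm V)) (B : Subgroup (Equiv.Perm W)) :
    Subgroup (Equiv.Perm (W → V)) where
  carrier := {φ | ∃ β ∈ B, ∃ α : W → Equiv.Perm V, (∀ w, α w ∈ A) ∧
    ∀ (f : W → V) (w : W), φ f w = α w (f (β w))}
  one_mem' := ⟨1, B.one_mem, fun _ => 1, fun _ => A.one_mem, fun f w => rfl⟩
  mul_mem' := by
    rintro φ₁ φ₂ ⟨β₁, hβ₁, α₁, hα₁, h₁⟩ ⟨β₂, hβ₂, α₂, hα₂, h₂⟩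
    refine ⟨β₂ * β₁, B.mul_mem hβ₂ hβ₁, fun w => α₁ w * α₂ (β₁ w),
      fun w => A.mul_mem (hα₁ _) (hα₂ _), fun f w => ?_⟩
    have h0 : (φ₁ * φ₂) f = φ₁ (φ₂ f) := rfl
    rw [h0, h₁ (φ₂ f) w, h₂ f (β₁ w)]
    rfl
  inv_mem' := by
    rintro φ ⟨β, hβ, α, hα, h⟩
    refine ⟨β⁻¹, B.inv_mem hβ, fun w => (α (β⁻¹ w))⁻¹,
      fun w => A.inv_mem (hα _), fun f w => ?_⟩
    have hf : f = φ (φ⁻¹ f) := by simp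
    conv_rhs => rw [hf]
    rw [h (φ⁻¹ f) (β⁻¹ w)]
    simp

/-- The parallel multiple `B × I_T` of a permutation group `(B, W)`, acting on `W × T`. -/
def parMul {W : Type} (B : Subgroup (Equiv.Perm W)) (T : Type) :
    Subgroup (Equiv.Perm (W × T)) where
  carrier := {γ | ∃ β ∈ B, ∀ p : W × T, γ p = (β p.1, p.2)}
  one_mem' := ⟨1, B.one_mem, fun p => rfl⟩
  mul_mem' := by
    rintro γ₁ γ₂ ⟨β₁, hβ₁, h₁⟩ ⟨β₂, hβ₂, h₂⟩
    refine ⟨β₁ * β₂, B.mul_mem hβ₁ hβ₂, fun p => ?_⟩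
    have h0 : (γ₁ * γ₂) p = γ₁ (γ₂ p) := rfl
    rw [h0, h₂, h₁]
    rfl
  inv_mem' := by
    rintro γ ⟨β, hβ, h⟩
    refine ⟨β⁻¹, B.inv_mem hβ, fun p => ?_⟩
    have key : γ (β⁻¹ p.1, p.2) = p := by rw [h]; simp
    calc γ⁻¹ p = γ⁻¹ (γ (β⁻¹ p.1, p.2)) := by rw [key]
    _ = (β⁻¹ p.1, p.2) := by simp

/-- The composition `H2 ∘ H1` of a colored graph `H2` on `W` with a colored graph
`H1` on `V`: a colored graph on `V × W`. -/
noncomputable def compGraph {V W C : Type} (H2 : Sym2 W → C) (H1 : Sym2 V → C) :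
    Sym2 (V × W) → C :=
  Sym2.lift ⟨fun p q => if p.2 = q.2 then H1 s(p.1, q.1) else H2 s(p.2, q.2), by
    intro p q
    dsimp only
    by_cases h : p.2 = q.2
    · rw [if_pos h, if_pos h.symm, Sym2.eq_swap]
    · rw [if_neg h, if_neg (fun hh => h hh.symm), Sym2.eq_swap]⟩

/-- Coordinatewise action of a family of permutations of `V` on `W → V`. -/
def mapPerm {V W : Type} (a : W → Equiv.Perm V) : Equiv.Perm (W → V) where
  toFun f w := a w (f w)
  invFun f w := (a w).symm (f w)
  left_inv f := funext fun w => (a w).symm_apply_apply _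
  right_inv f := funext fun w => (a w).apply_symm_apply _

lemma mapPerm_apply {V W : Type} (a : W → Equiv.Perm V) (f : W → V) (w : W) :
    mapPerm a f w = a w (f w) := rfl

lemma mapPerm_mem {V W : Type} (A : Subgroup (Equiv.Perm V)) (B : Subgroup (Equiv.Perm W))
    (a : W → Equiv.Perm V) (ha : ∀ w, a w ∈ A) : mapPerm a ∈ prodWr A B :=
  ⟨1, B.one_mem, a, ha, fun f w => by simp [mapPerm_apply]⟩

lemma self_mem_orbital {V : Type} (A : Subgroup (Equiv.Perm V)) (x : V × V) :
    x ∈ orbital A x := ⟨1, A.one_mem, rfl⟩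

lemma orbital_smul {V : Type} (A : Subgroup (Equiv.Perm V)) {a : Equiv.Perm V}
    (ha : a ∈ A) (v w : V) : orbital A (a v, a w) = orbital A (v, w) := by
  ext y
  constructor
  · rintro ⟨b, hb, rfl⟩
    exact ⟨b * a, A.mul_mem hb ha, rfl⟩
  · rintro ⟨b, hb, rfl⟩
    refine ⟨b * a⁻¹, A.mul_mem hb (A.inv_mem ha), ?_⟩
    simp [Equiv.Perm.mul_apply]

lemma orbital_swap {V : Type} (A : Subgroup (Equiv.Perm V)) (v w : V) :
    orbital A (w, v) = Prod.swap '' orbital A (v, w) := by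
  ext y
  constructor
  · rintro ⟨b, hb, rfl⟩
    exact ⟨(b v, b w), ⟨b, hb, rfl⟩, rfl⟩
  · rintro ⟨p, ⟨b, hb, rfl⟩, rfl⟩
    exact ⟨b, hb, rfl⟩

/-- If `A ∈ DGR`, `A ∉ GR`, `A ≠ I₂`, and some permutation of `V`
transposes the orbitals of `A`, then for every permutation group `(B, W)` the
product-action wreath product `A Wr B` does not belong to GR. -/
theorem stmt12 {V : Type} [Nontrivial V] (A : Subgroup (Equiv.Perm V))
    (hA : IsDGR A) (hA2 : ¬ IsGR A) (hA3 : ¬ IsI2 A)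
    (htr : ∃ α : Equiv.Perm V, TransposesOrbitals A α) :
    ∀ (W : Type) [Nontrivial W] (B : Subgroup (Equiv.Perm W)),
      ¬ IsGR (prodWr A B) := by
  intro W _ B hGR
  obtain ⟨C, E, hE⟩ := hGR
  obtain ⟨α, hα⟩ := htr
  obtain ⟨C0, E0, hE0⟩ := hA
  -- the coordinatewise action of α
  set φ : Equiv.Perm (W → V) := mapPerm (fun _ => α) with hφdef
  have hφ : ∀ (f : W → V) (w : W), φ f w = α (f w) := fun f w => rfl
  -- Step 1: φ preserves the coloring E
  have hφE : φ ∈ graphAut E := by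
    intro f g hfg
    have hkey : ∀ w : W, ∃ b, b ∈ A ∧ b (g w) = α (f w) ∧ b (f w) = α (g w) := by
      intro w
      have h1 : (α (f w), α (g w)) ∈
          (fun y : V × V => (α y.1, α y.2)) '' orbital A (f w, g w) :=
        ⟨(f w, g w), self_mem_orbital A _, rfl⟩
      rw [hα (f w, g w)] at h1
      obtain ⟨p, ⟨b, hb, rfl⟩, hsw⟩ := h1
      have h2 : b (g w) = α (f w) := congrArg Prod.fst hsw
      have h3 : b (f w) = α (g w) := congrArg Prod.snd hsw
      exact ⟨b, hb, h2, h3⟩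
    choose b hbA hb1 hb2 using hkey
    have hσ : mapPerm b ∈ graphAut E := by
      rw [hE]; exact mapPerm_mem A B b hbA
    have hσg : mapPerm b g = φ f := funext fun w => by rw [mapPerm_apply, hb1, hφ]
    have hσf : mapPerm b f = φ g := funext fun w => by rw [mapPerm_apply, hb2, hφ]
    calc E s(φ f, φ g) = E s(mapPerm b g, mapPerm b f) := by rw [hσg, hσf]
      _ = E s(g, f) := hσ g f (fun h => hfg h.symm)
      _ = E s(f, g) := by rw [Sym2.eq_swap]
  -- Step 2: hence φ ∈ A Wr B, and unpack
  rw [hE] at hφE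
  obtain ⟨β, hβ, a, haA, hfw⟩ := hφE
  -- Step 3: β is the identity
  have hβ1 : ∀ w : W, β w = w := by
    intro w
    by_contra hne
    obtain ⟨v1, v2, hv⟩ := exists_pair_ne V
    have h1 := hfw (fun _ => v1) w
    have h2 := hfw (fun u => if u = w then v2 else v1) w
    rw [hφ] at h1 h2
    rw [if_pos rfl, if_neg hne] at h2
    exact hv (α.injective (h1.trans h2.symm))
  -- Step 4: α ∈ A
  obtain ⟨w0⟩ : Nonempty W := inferInstance
  have hαA : α ∈ A := by
    have : α = a w0 := by
      ext v
      have := hfw (fun _ => v) w0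
      rwa [hφ] at this
    rw [this]; exact haA w0
  -- Step 5: every orbital is self-paired
  have hsp : ∀ x : V × V, Prod.swap '' orbital A x = orbital A x := by
    intro x
    rw [← hα x]
    ext y
    constructor
    · rintro ⟨p, ⟨c, hc, rfl⟩, rfl⟩
      exact ⟨α * c, A.mul_mem hαA hc, rfl⟩
    · rintro ⟨c, hc, rfl⟩
      refine ⟨((α⁻¹ * c) x.1, (α⁻¹ * c) x.2), ⟨α⁻¹ * c, A.mul_mem (A.inv_mem hαA) hc, rfl⟩, ?_⟩
      simp [Equiv.Perm.mul_apply]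
  have hsym : ∀ v w : V, orbital A (v, w) = orbital A (w, v) := by
    intro v w
    rw [orbital_swap A w v]
    exact hsp (w, v)
  -- Step 6: build a colored graph whose automorphism group is A
  apply hA2
  refine ⟨Set (V × V), Sym2.lift ⟨fun v w => orbital A (v, w), hsym⟩, ?_⟩
  have hlift : ∀ v w : V,
      Sym2.lift ⟨fun v w => orbital A (v, w), hsym⟩ s(v, w)
        = orbital A (v, w) := fun v w => Sym2.lift_mk _ v w
  have hE0A : ∀ {c : Equiv.Perm V}, c ∈ A → ∀ v w : V, E0 (c v) (c w) = E0 v w := by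
    intro c hc v w
    rw [← hE0] at hc
    exact hc v w
  ext σ
  constructor
  · intro hσ
    rw [← hE0]
    intro v w
    have hget : ∀ v w : V, v ≠ w → ∃ c, c ∈ A ∧ c v = σ v ∧ c w = σ w := by
      intro v w hvw
      have h1 := hσ v w hvw
      rw [hlift, hlift] at h1
      have h2 : (σ v, σ w) ∈ orbital A (v, w) := by
        rw [← h1]; exact self_mem_orbital A _
      obtain ⟨c, hc, hce⟩ := h2
      exact ⟨c, hc, congrArg Prod.fst hce, congrArg Prod.snd hce⟩
    by_cases hvw : v = w
    · subst hvw
      obtain ⟨u, hu⟩ := exists_ne v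
      obtain ⟨c, hc, hcv, _⟩ := hget v u (fun h => hu h.symm)
      rw [← hcv]
      exact hE0A hc v v
    · obtain ⟨c, hc, hcv, hcw⟩ := hget v w hvw
      rw [← hcv, ← hcw]
      exact hE0A hc v w
  · intro hσ v w _
    rw [hlift, hlift]
    exact orbital_smul A hσ v w
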